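/- arXiv:math/0005225 — 7 statements merged into one kernel-verified Lean document; each statement's English description precedes it below -/
import Mathlib

section
/- Let U be a Hopf *-algebra, Z a left U-module *-algebra, χ a linear functional on U, h a linear functional on Z, and ⟨y,x⟩ := h(x* y). If χ(f)⟨y,x⟩ = ⟨f₍₂₎ ▷ y, S(f₍₁₎)* ▷ x⟩ for all f, x, y, then ⟨f ▷ y, x⟩ = χ(f₍₂₎) ⟨y, f₍₁₎* ▷ x⟩ for all f ∈ U and x,y ∈ Z. -/
/-!
Writing `Δ f = f₍₁₎ ⊗ f₍₂₎`, the antipode axiom and coassociativity give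
`f₍₁₎ S(f₍₂₎) ⊗ f₍₃₎ = 1 ⊗ f`. Apply the functional `u ⊗ v ↦ ⟨v ▷ y, u* ▷ x⟩` to both
sides: the right side is `⟨f ▷ y, x⟩`, while on the left `(f₍₁₎ S(f₍₂₎))* ▷ x` splits as
`S(f₍₂₎)* ▷ (f₍₁₎* ▷ x)`, so the hypothesis, applied to `f₍₂₎` and `f₍₁₎* ▷ x`, turns the left
side into `χ(f₍₂₎) ⟨y, f₍₁₎* ▷ x⟩`.
-/

open TensorProduct

theorem TensorProduct.exists_fin_sum_tmul {R M N : Type*} [CommSemiring R]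
    [AddCommMonoid M] [AddCommMonoid N] [Module R M] [Module R N] (x : M ⊗[R] N) :
    ∃ (n : ℕ) (m : Fin n → M) (p : Fin n → N), x = ∑ i, m i ⊗ₜ[R] p i := by
  obtain ⟨S, rfl⟩ := exists_finset x
  refine ⟨S.card, fun i => (S.equivFin.symm i).1.1, fun i => (S.equivFin.symm i).1.2, ?_⟩
  rw [← Finset.sum_coe_sort, ← S.equivFin.symm.sum_comp]

namespace HopfAlgebra

open Coalgebra

theorem sum_sum_mul_antipode_tmul_eq_one_tmul {R A : Type*} [CommSemiring R] [Semiring A]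
    [HopfAlgebra R A] {ι : Type*} [Fintype ι] {κ : ι → Type*} [∀ i, Fintype (κ i)]
    {f : A} {a b : ι → A} (hf : comul (R := R) f = ∑ i, a i ⊗ₜ[R] b i)
    {p q : (i : ι) → κ i → A} (hb : ∀ i, comul (R := R) (b i) = ∑ j, p i j ⊗ₜ[R] q i j) :
    ∑ i, ∑ j, (a i * antipode R (p i j)) ⊗ₜ[R] q i j = 1 ⊗ₜ[R] f := by
  set T := (LinearMap.mul' R A ∘ₗ (antipode R).lTensor A).rTensor A ∘ₗ
    (TensorProduct.assoc R A A A).symm.toLinearMap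
  calc ∑ i, ∑ j, (a i * antipode R (p i j)) ⊗ₜ[R] q i j
      = T ((comul (R := R)).lTensor A (comul f)) := by
        simp [T, hf, hb, tmul_sum]
    _ = (LinearMap.mul' R A ∘ₗ (antipode R).lTensor A ∘ₗ comul).rTensor A (comul f) := by
        simp [T, LinearMap.rTensor_comp]
    _ = 1 ⊗ₜ[R] f := by
        rw [mul_antipode_lTensor_comul, LinearMap.rTensor_comp, LinearMap.comp_apply,
          rTensor_counit_comul]
        simp

end HopfAlgebra

section TwistedPairing

variable {R U Z : Type*} [CommSemiring R] [StarRing R]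
  [Semiring U] [StarRing U] [Module R U] [StarModule R U]
  [Semiring Z] [StarRing Z] [Algebra R Z] [StarModule R Z]
  (act : U →ₗ[R] Z →ₗ[R] Z) (h : Z →ₗ[R] R)

def starConjAct (x : Z) : U →ₗ[R] Z where
  toFun u := star (act (star u) x)
  map_add' u v := by simp only [star_add, map_add, LinearMap.add_apply]
  map_smul' c u := by simp [star_smul]

/-- In the paper's notation `⟨y, x⟩ = h (x* y)`, this is `u ⊗ v ↦ ⟨v ▷ y, u* ▷ x⟩`. -/
def twistedPairing (x y : Z) : U ⊗[R] U →ₗ[R] R :=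
  lift <| LinearMap.mk₂ R (fun u v => h (starConjAct act x u * act v y))
    (fun u u' v => by simp only [map_add, add_mul])
    (fun c u v => by simp only [map_smul, smul_mul_assoc])
    (fun u v v' => by simp only [map_add, LinearMap.add_apply, mul_add])
    (fun c u v => by simp only [map_smul, LinearMap.smul_apply, mul_smul_comm])

@[simp]
theorem twistedPairing_tmul (x y : Z) (u v : U) :
    twistedPairing act h x y (u ⊗ₜ v) = h (star (act (star u) x) * act v y) := rfl

theorem twistedPairing_one_tmul (hact_one : ∀ z, act 1 z = z) (x y : Z) (f : U) :
    twistedPairing act h x y (1 ⊗ₜ f) = h (star x * act f y) := by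
  simp [hact_one]

theorem twistedPairing_mul_tmul (hact_mul : ∀ f g z, act (f * g) z = act f (act g z))
    (x y : Z) (u w v : U) :
    twistedPairing act h x y ((u * w) ⊗ₜ v) =
      twistedPairing act h (act (star u) x) y (w ⊗ₜ v) := by
  simp [star_mul, hact_mul]

end TwistedPairing

theorem statement2_general {U Z : Type*} [Ring U] [HopfAlgebra ℂ U]
    [StarRing U] [StarModule ℂ U]
    [Ring Z] [Algebra ℂ Z] [StarRing Z] [StarModule ℂ Z]
    (act : U →ₗ[ℂ] Z →ₗ[ℂ] Z)
    (hact_mul : ∀ (f g : U) (z : Z), act (f * g) z = act f (act g z))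
    (hact_one : ∀ z : Z, act 1 z = z)
    (χ : U →ₗ[ℂ] ℂ) (h : Z →ₗ[ℂ] ℂ)
    (hii : ∀ (f : U) (x y : Z) (n : ℕ) (a b : Fin n → U),
      Coalgebra.comul (R := ℂ) f = ∑ i, a i ⊗ₜ[ℂ] b i →
      χ f * h (star x * y) =
        ∑ i, h (star (act (star (HopfAlgebra.antipode (R := ℂ) (a i))) x) * act (b i) y)) :
    ∀ (f : U) (x y : Z) (n : ℕ) (a b : Fin n → U),
      Coalgebra.comul (R := ℂ) f = ∑ i, a i ⊗ₜ[ℂ] b i →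
      h (star x * act f y) = ∑ i, χ (b i) * h (star (act (star (a i)) x) * y) := by
  intro f x y n a b hf
  choose m p q hb using fun i => exists_fin_sum_tmul (Coalgebra.comul (R := ℂ) (b i))
  calc h (star x * act f y)
      = twistedPairing act h x y (1 ⊗ₜ f) := (twistedPairing_one_tmul act h hact_one x y f).symm
    _ = ∑ i, ∑ j, h (star (act (star (HopfAlgebra.antipode ℂ (p i j)))
          (act (star (a i)) x)) * act (q i j) y) := by
        simp only [← HopfAlgebra.sum_sum_mul_antipode_tmul_eq_one_tmul hf hb, map_sum,
          twistedPairing_mul_tmul act h hact_mul, twistedPairing_tmul]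
    _ = ∑ i, χ (b i) * h (star (act (star (a i)) x) * y) :=
        Finset.sum_congr rfl fun i _ =>
          (hii (b i) (act (star (a i)) x) y (m i) (p i) (q i) (hb i)).symm

/-- If `χ(f)⟨y,x⟩ = ⟨f₍₂₎ ▷ y, S(f₍₁₎)* ▷ x⟩` holds for all `f, x, y`,
then `⟨f ▷ y, x⟩ = χ(f₍₂₎) ⟨y, f₍₁₎* ▷ x⟩` for all `f ∈ U` and `x,y ∈ Z`,
where `⟨y,x⟩ = h(x* y)` and Sweedler sums are expressed by quantifying over finite
decompositions of `Δ f`. -/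
theorem statement2 {U Z : Type*} [Ring U] [HopfAlgebra ℂ U]
    [StarRing U] [StarModule ℂ U]
    [Ring Z] [Algebra ℂ Z] [StarRing Z] [StarModule ℂ Z]
    (act : U →ₗ[ℂ] Z →ₗ[ℂ] Z)
    (hact_mul : ∀ (f g : U) (z : Z), act (f * g) z = act f (act g z))
    (hact_one : ∀ z : Z, act 1 z = z)
    (hact_alg : ∀ (f : U) (z w : Z) (n : ℕ) (a b : Fin n → U),
      Coalgebra.comul (R := ℂ) f = ∑ i, a i ⊗ₜ[ℂ] b i →
      act f (z * w) = ∑ i, act (a i) z * act (b i) w)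
    (hact_star : ∀ (f : U) (z : Z),
      star (act f z) = act (star (HopfAlgebra.antipode (R := ℂ) f)) (star z))
    (hSstar : ∀ f : U,
      HopfAlgebra.antipode (R := ℂ)
        (star (HopfAlgebra.antipode (R := ℂ) (star f))) = f)
    (hcomul_star : ∀ (f : U) (n : ℕ) (a b : Fin n → U),
      Coalgebra.comul (R := ℂ) f = ∑ i, a i ⊗ₜ[ℂ] b i →
      Coalgebra.comul (R := ℂ) (star f) = ∑ i, star (a i) ⊗ₜ[ℂ] star (b i))
    (hcounit_star : ∀ f : U,
      Coalgebra.counit (R := ℂ) (star f) = starRingEnd ℂ (Coalgebra.counit (R := ℂ) f))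
    (χ : U →ₗ[ℂ] ℂ) (h : Z →ₗ[ℂ] ℂ)
    (hii : ∀ (f : U) (x y : Z) (n : ℕ) (a b : Fin n → U),
      Coalgebra.comul (R := ℂ) f = ∑ i, a i ⊗ₜ[ℂ] b i →
      χ f * h (star x * y) =
        ∑ i, h (star (act (star (HopfAlgebra.antipode (R := ℂ) (a i))) x) * act (b i) y)) :
    ∀ (f : U) (x y : Z) (n : ℕ) (a b : Fin n → U),
      Coalgebra.comul (R := ℂ) f = ∑ i, a i ⊗ₜ[ℂ] b i →
      h (star x * act f y) = ∑ i, χ (b i) * h (star (act (star (a i)) x) * y) :=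
  statement2_general act hact_mul hact_one χ h hii
end

section
/- Let U be a Hopf *-algebra and Z a unital left U-module *-algebra. A linear functional h on Z is invariant (h(f ▷ z) = ε(f) h(z) for all f ∈ U, z ∈ Z) if and only if ⟨f ▷ y, x⟩ = ⟨y, f* ▷ x⟩ for all x,y ∈ Z and f ∈ U, where ⟨y,x⟩ := h(x* y). -/
/-!
If `h` is invariant, then for a coproduct `Δg = Σ g₁ ⊗ g₂` the Sweedler computation
`h((g ▷ z) w) = Σ h((g₁ ▷ z)(g₂ S(g₃) ▷ w)) = Σ h(g₁ ▷ (z (S(g₂) ▷ w))) = h(z (S(g) ▷ w))`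
moves `g` across the product as its antipode. Taking `z = x*` and `g = (S(f*))*`, the compatibility
of `▷` with `*` and `S((S(f*))*) = f` turn this into the adjointness relation. Conversely, putting
`x = 1` in the adjointness relation and using `f* ▷ 1 = ε(f*) 1` gives invariance.
-/

open TensorProduct Coalgebra HopfAlgebra

namespace Coalgebra

variable {R A ι : Type*} [CommSemiring R] [AddCommMonoid A] [Module R A] [Coalgebra R A] {a : A}

lemma sum_counit_right_smul_left (𝓡 : Repr R a ι) :
    ∑ i ∈ 𝓡.index, counit (R := R) (𝓡.right i) • 𝓡.left i = a := by
  simpa only [map_sum, _root_.TensorProduct.rid_tmul, one_smul] using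
    congrArg (_root_.TensorProduct.rid R A) (sum_tmul_counit_eq 𝓡)

end Coalgebra

section ModuleAlgebra

variable {R U Z : Type*} [CommSemiring R] [Semiring U] [HopfAlgebra R U] [Semiring Z] [Algebra R Z]
  {act : U →ₗ[R] Z →ₗ[R] Z}

lemma act_mul_eq_sum_of_repr
    (hact_alg : ∀ (f : U) (z w : Z) (n : ℕ) (a b : Fin n → U),
      comul (R := R) f = ∑ i, a i ⊗ₜ[R] b i → act f (z * w) = ∑ i, act (a i) z * act (b i) w)
    {ι : Type*} {f : U} (𝓡 : Repr R f ι) (z w : Z) :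
    act f (z * w) = ∑ i ∈ 𝓡.index, act (𝓡.left i) z * act (𝓡.right i) w := by
  obtain ⟨n, a, b, hab⟩ := exists_sum_tmul_eq (comul (R := R) f)
  let Φ := LinearMap.mul' R Z ∘ₗ TensorProduct.map (act.flip z) (act.flip w)
  have hfin := congr(Φ $hab)
  have hrepr := congr(Φ $𝓡.eq)
  simp only [map_sum, Φ, LinearMap.comp_apply, map_tmul, LinearMap.mul'_apply,
    LinearMap.flip_apply] at hfin hrepr
  rw [hact_alg f z w n a b hab, ← hfin, hrepr]

lemma sum_act_act_antipode_of_repr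
    (hact_mul : ∀ (f g : U) (z : Z), act (f * g) z = act f (act g z))
    (hact_one : ∀ z : Z, act 1 z = z) {ι : Type*} {f : U} (𝓡 : Repr R f ι) (z : Z) :
    ∑ i ∈ 𝓡.index, act (𝓡.left i) (act (antipode R (𝓡.right i)) z) = counit (R := R) f • z := by
  simp_rw [← hact_mul, ← LinearMap.sum_apply, ← map_sum, sum_mul_antipode_eq_smul, map_smul,
    LinearMap.smul_apply, hact_one]

lemma map_act_mul_eq_map_mul_act_antipode
    (hact_mul : ∀ (f g : U) (z : Z), act (f * g) z = act f (act g z))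
    (hact_one : ∀ z : Z, act 1 z = z)
    (hact_alg : ∀ (f : U) (z w : Z) (n : ℕ) (a b : Fin n → U),
      comul (R := R) f = ∑ i, a i ⊗ₜ[R] b i → act f (z * w) = ∑ i, act (a i) z * act (b i) w)
    {h : Z →ₗ[R] R} (hinv : ∀ (f : U) (z : Z), h (act f z) = counit (R := R) f * h z)
    (g : U) (z w : Z) :
    h (act g z * w) = h (z * act (antipode R g) w) := by
  let 𝓡 := ℛ R g
  let 𝓡₁ i := ℛ R (𝓡.left i)
  let 𝓡₂ i := ℛ R (𝓡.right i)
  let Θ : U ⊗[R] (U ⊗[R] U) →ₗ[R] R := h ∘ₗ LinearMap.mul' R Z ∘ₗ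
    TensorProduct.map (act.flip z) (lift act ∘ₗ (act.flip w ∘ₗ antipode R).lTensor U)
  have hΘ : ∀ u v t, Θ (u ⊗ₜ (v ⊗ₜ t)) = h (act u z * act v (act (antipode R t) w)) := by
    simp [Θ]
  have coassoc := congr(Θ $(sum_tmul_tmul_eq 𝓡 𝓡₁ 𝓡₂))
  simp only [map_sum, hΘ] at coassoc
  calc h (act g z * w)
      = ∑ i ∈ 𝓡.index, counit (R := R) (𝓡.right i) * h (act (𝓡.left i) z * w) := by
        conv_lhs => rw [← sum_counit_right_smul_left 𝓡]
        simp [map_sum, Finset.sum_mul]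
    _ = ∑ i ∈ 𝓡.index, ∑ j ∈ (𝓡₂ i).index, h (act (𝓡.left i) z *
          act ((𝓡₂ i).left j) (act (antipode R ((𝓡₂ i).right j)) w)) := by
        refine Finset.sum_congr rfl fun i _ => ?_
        rw [← map_sum, ← Finset.mul_sum, sum_act_act_antipode_of_repr hact_mul hact_one,
          mul_smul_comm, map_smul, smul_eq_mul]
    _ = ∑ i ∈ 𝓡.index, ∑ j ∈ (𝓡₁ i).index, h (act ((𝓡₁ i).left j) z *
          act ((𝓡₁ i).right j) (act (antipode R (𝓡.right i)) w)) := coassoc.symm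
    _ = ∑ i ∈ 𝓡.index, counit (R := R) (𝓡.left i) * h (z * act (antipode R (𝓡.right i)) w) := by
        refine Finset.sum_congr rfl fun i _ => ?_
        rw [← map_sum, ← act_mul_eq_sum_of_repr hact_alg, hinv]
    _ = h (z * act (antipode R g) w) := by
        conv_rhs => rw [← sum_counit_smul 𝓡]
        simp [map_sum, Finset.mul_sum]

lemma map_star_mul_act_eq_of_invariant [Star U] [Star Z]
    (hact_mul : ∀ (f g : U) (z : Z), act (f * g) z = act f (act g z))
    (hact_one : ∀ z : Z, act 1 z = z)
    (hact_alg : ∀ (f : U) (z w : Z) (n : ℕ) (a b : Fin n → U),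
      comul (R := R) f = ∑ i, a i ⊗ₜ[R] b i → act f (z * w) = ∑ i, act (a i) z * act (b i) w)
    (hact_star : ∀ (f : U) (z : Z), star (act f z) = act (star (antipode R f)) (star z))
    (hSstar : ∀ f : U, antipode R (star (antipode R (star f))) = f)
    {h : Z →ₗ[R] R} (hinv : ∀ (f : U) (z : Z), h (act f z) = counit (R := R) f * h z)
    (f : U) (x y : Z) :
    h (star x * act f y) = h (star (act (star f) x) * y) := by
  have key := map_act_mul_eq_map_mul_act_antipode hact_mul hact_one hact_alg hinv
    (star (antipode R (star f))) (star x) y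
  rw [hSstar, ← hact_star] at key
  exact key.symm

end ModuleAlgebra

lemma map_act_eq_counit_mul_of_adjoint {R U Z : Type*} [CommSemiring R] [StarRing R]
    [AddCommMonoid U] [Module R U] [CoalgebraStruct R U] [Star U]
    [Semiring Z] [Algebra R Z] [StarRing Z] [StarModule R Z] {act : U →ₗ[R] Z →ₗ[R] Z}
    (hact_unit : ∀ f : U, act f (1 : Z) = counit (R := R) f • (1 : Z))
    (hcounit_star : ∀ f : U, counit (R := R) (star f) = starRingEnd R (counit (R := R) f))
    {h : Z →ₗ[R] R}
    (hadj : ∀ (f : U) (x y : Z), h (star x * act f y) = h (star (act (star f) x) * y))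
    (f : U) (z : Z) :
    h (act f z) = counit (R := R) f * h z := by
  calc h (act f z) = h (star 1 * act f z) := by rw [star_one, one_mul]
    _ = h (star (act (star f) 1) * z) := hadj f 1 z
    _ = counit (R := R) f * h z := by simp [hact_unit, hcounit_star, star_smul, starRingEnd_apply]

theorem statement3_general {U Z : Type*} [Ring U] [HopfAlgebra ℂ U] [StarRing U]
    [Ring Z] [Algebra ℂ Z] [StarRing Z] [StarModule ℂ Z]
    (act : U →ₗ[ℂ] Z →ₗ[ℂ] Z)
    (hact_mul : ∀ (f g : U) (z : Z), act (f * g) z = act f (act g z))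
    (hact_one : ∀ z : Z, act 1 z = z)
    (hact_alg : ∀ (f : U) (z w : Z) (n : ℕ) (a b : Fin n → U),
      Coalgebra.comul (R := ℂ) f = ∑ i, a i ⊗ₜ[ℂ] b i →
      act f (z * w) = ∑ i, act (a i) z * act (b i) w)
    (hact_unit : ∀ f : U, act f (1 : Z) = Coalgebra.counit (R := ℂ) f • (1 : Z))
    (hact_star : ∀ (f : U) (z : Z),
      star (act f z) = act (star (HopfAlgebra.antipode (R := ℂ) f)) (star z))
    (hSstar : ∀ f : U,
      HopfAlgebra.antipode (R := ℂ)
        (star (HopfAlgebra.antipode (R := ℂ) (star f))) = f)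
    (hcounit_star : ∀ f : U,
      Coalgebra.counit (R := ℂ) (star f) = starRingEnd ℂ (Coalgebra.counit (R := ℂ) f))
    (h : Z →ₗ[ℂ] ℂ) :
    (∀ (f : U) (z : Z), h (act f z) = Coalgebra.counit (R := ℂ) f * h z) ↔
      (∀ (f : U) (x y : Z), h (star x * act f y) = h (star (act (star f) x) * y)) :=
  ⟨map_star_mul_act_eq_of_invariant hact_mul hact_one hact_alg hact_star hSstar,
    map_act_eq_counit_mul_of_adjoint hact_unit hcounit_star⟩

/-- For a unital left `U`-module *-algebra `Z` over a Hopf *-algebra `U`,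
a linear functional `h` on `Z` is invariant (`h(f ▷ z) = ε(f) h(z)`) if and only if
`⟨f ▷ y, x⟩ = ⟨y, f* ▷ x⟩` for all `x, y ∈ Z` and `f ∈ U`, where `⟨y,x⟩ = h(x* y)`. -/
theorem statement3 {U Z : Type*} [Ring U] [HopfAlgebra ℂ U]
    [StarRing U] [StarModule ℂ U]
    [Ring Z] [Algebra ℂ Z] [StarRing Z] [StarModule ℂ Z]
    (act : U →ₗ[ℂ] Z →ₗ[ℂ] Z)
    (hact_mul : ∀ (f g : U) (z : Z), act (f * g) z = act f (act g z))
    (hact_one : ∀ z : Z, act 1 z = z)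
    (hact_alg : ∀ (f : U) (z w : Z) (n : ℕ) (a b : Fin n → U),
      Coalgebra.comul (R := ℂ) f = ∑ i, a i ⊗ₜ[ℂ] b i →
      act f (z * w) = ∑ i, act (a i) z * act (b i) w)
    (hact_unit : ∀ f : U, act f (1 : Z) = Coalgebra.counit (R := ℂ) f • (1 : Z))
    (hact_star : ∀ (f : U) (z : Z),
      star (act f z) = act (star (HopfAlgebra.antipode (R := ℂ) f)) (star z))
    (hSstar : ∀ f : U,
      HopfAlgebra.antipode (R := ℂ)
        (star (HopfAlgebra.antipode (R := ℂ) (star f))) = f)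
    (hcomul_star : ∀ (f : U) (n : ℕ) (a b : Fin n → U),
      Coalgebra.comul (R := ℂ) f = ∑ i, a i ⊗ₜ[ℂ] b i →
      Coalgebra.comul (R := ℂ) (star f) = ∑ i, star (a i) ⊗ₜ[ℂ] star (b i))
    (hcounit_star : ∀ f : U,
      Coalgebra.counit (R := ℂ) (star f) = starRingEnd ℂ (Coalgebra.counit (R := ℂ) f))
    (h : Z →ₗ[ℂ] ℂ) :
    (∀ (f : U) (z : Z), h (act f z) = Coalgebra.counit (R := ℂ) f * h z) ↔
      (∀ (f : U) (x y : Z), h (star x * act f y) = h (star (act (star f) x) * y)) :=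
  statement3_general act hact_mul hact_one hact_alg hact_unit hact_star hSstar hcounit_star h
end

section
/- Let q ∈ ℂ, q ≠ 0, q² ≠ 1, and let D_{q^{-2}} be the q-difference operator D_{q^{-2}}(f)(x) = (f(x) − f(q^{-2}x))/((1−q^{-2})x) on polynomials. In the quantum plane algebra O(ℂ²_q) with its U_q(gl₂)-module algebra structure, for polynomials g, h in one variable: F ▷ (g(x)h(y)) = q^{-1/2} g(q^{1/2}x) x D_{q^{-2}}(h(q^{1/2}·))(y). -/
/-!
`F` is a twisted derivation: `F (z * w) = F z * σ w + τ z * F w` for the algebra endomorphisms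
`σ = K₁K₂⁻¹` and `τ = K₁⁻¹K₂`. Since `F x = 0`, `F` kills every polynomial in `x`, so
`F (g(x) h(y)) = τ (g(x)) F (h(y)) = g(r x) F (h(y))`. On powers of `y`, the twisted Leibniz rule
and `y x = q⁻¹ x y` give `F (y^(n+1)) = r^n [n+1]_{q⁻²} x y^n`, and the `q`-integer
`[n+1]_c = 1 + c + ⋯ + c^n` is exactly the coefficient `D_c` produces from `X^(n+1)`.
-/

open Polynomial

/-- The `q`-difference operator `D_c(f)(x) = (f(x) − f(cx))/((1−c)x)` on polynomials. -/
noncomputable def qDiff (c : ℂ) (p : Polynomial ℂ) : Polynomial ℂ :=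
  Polynomial.C ((1 - c)⁻¹) * Polynomial.divX (p - p.comp (Polynomial.C c * Polynomial.X))

open Finset

lemma qDiff_add (c : ℂ) (p p' : ℂ[X]) : qDiff c (p + p') = qDiff c p + qDiff c p' := by
  simp only [qDiff, add_comp, add_sub_add_comm, divX_add, mul_add]

lemma qDiff_smul (c a : ℂ) (p : ℂ[X]) : qDiff c (a • p) = a • qDiff c p := by
  rw [qDiff, qDiff, smul_eq_C_mul, smul_eq_C_mul, mul_comp, C_comp, ← mul_sub, divX_C_mul,
    mul_left_comm]

lemma qDiff_one (c : ℂ) : qDiff c 1 = 0 := by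
  simp [qDiff]

lemma qDiff_X_pow_succ {c : ℂ} (hc : c ≠ 1) (n : ℕ) :
    qDiff c (X ^ (n + 1)) = (∑ i ∈ range (n + 1), c ^ i) • X ^ n := by
  have hsub :
      X ^ (n + 1) - C (c ^ (n + 1)) * X ^ (n + 1) = C (1 - c ^ (n + 1)) * X ^ (n + 1) := by
    rw [C_sub, C_1]; ring
  rw [qDiff, X_pow_comp, mul_pow, ← C_pow, hsub, divX_C_mul, divX_X_pow, if_neg n.succ_ne_zero,
    Nat.add_sub_cancel, ← mul_assoc, ← C_mul, smul_eq_C_mul, geom_sum_eq hc]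
  have hc' : c - 1 ≠ 0 := sub_ne_zero.mpr hc
  have hc'' : 1 - c ≠ 0 := sub_ne_zero.mpr hc.symm
  congr 2
  field_simp
  ring

lemma aeval_smul_eq_aeval_comp {R A : Type*} [CommSemiring R] [Semiring A] [Algebra R A]
    (r : R) (x : A) (g : R[X]) :
    aeval (r • x) g = aeval x (g.comp (C r * X)) := by
  simp [aeval_comp, Algebra.smul_def]

section TwistedLeibniz

variable {R A : Type*} [CommRing R] [Ring A] [Algebra R A] {σ τ : A →ₐ[R] A} {F : A →ₗ[R] A}

lemma map_pow_eq_zero_of_twisted_leibniz (hF : ∀ z w, F (z * w) = F z * σ w + τ z * F w)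
    (hF1 : F 1 = 0) {x : A} (hx : F x = 0) (n : ℕ) : F (x ^ n) = 0 := by
  induction n with
  | zero => rwa [pow_zero]
  | succ n ih => rw [pow_succ', hF, hx, ih, zero_mul, mul_zero, add_zero]

lemma map_aeval_eq_zero_of_twisted_leibniz (hF : ∀ z w, F (z * w) = F z * σ w + τ z * F w)
    (hF1 : F 1 = 0) {x : A} (hx : F x = 0) (g : R[X]) : F (aeval x g) = 0 := by
  rw [aeval_eq_sum_range, map_sum]
  exact sum_eq_zero fun i _ ↦ by
    rw [map_smul, map_pow_eq_zero_of_twisted_leibniz hF hF1 hx, smul_zero]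

lemma map_aeval_mul_of_twisted_leibniz (hF : ∀ z w, F (z * w) = F z * σ w + τ z * F w)
    (hF1 : F 1 = 0) {x : A} (hx : F x = 0) (g : R[X]) (w : A) :
    F (aeval x g * w) = τ (aeval x g) * F w := by
  rw [hF, map_aeval_eq_zero_of_twisted_leibniz hF hF1 hx, zero_mul, zero_add]

lemma map_pow_succ_of_twisted_leibniz (hF : ∀ z w, F (z * w) = F z * σ w + τ z * F w)
    {y : A} {s t u c : R} (hσ : σ y = s • y) (hτ : τ y = t • y)
    (hyF : y * F y = u • (F y * y)) (hc : t * u = s * c) (n : ℕ) :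
    F (y ^ (n + 1)) = (s ^ n * ∑ i ∈ range (n + 1), c ^ i) • (F y * y ^ n) := by
  induction n with
  | zero => simp
  | succ n ih =>
    have hcomm : y * (F y * y ^ n) = u • (F y * y ^ (n + 1)) := by
      rw [← mul_assoc, hyF, smul_mul_assoc, mul_assoc, ← pow_succ']
    rw [pow_succ' y (n + 1), hF, ih, map_pow, hσ, hτ, _root_.smul_pow, mul_smul_comm,
      smul_mul_assoc, mul_smul_comm, hcomm, smul_smul, smul_smul, ← add_smul,
      geom_sum_succ (n := n + 1)]
    congr 1
    linear_combination (s ^ n * ∑ i ∈ range (n + 1), c ^ i) * hc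

end TwistedLeibniz

lemma map_aeval_eq_smul_qDiff {A : Type*} [Ring A] [Algebra ℂ A] {F : A →ₗ[ℂ] A} {x y : A}
    {r c : ℂ} (hr : r ≠ 0) (hc : c ≠ 1) (hF1 : F 1 = 0)
    (hFy : ∀ n : ℕ, F (y ^ (n + 1)) = (r ^ n * ∑ i ∈ range (n + 1), c ^ i) • (x * y ^ n))
    (h : ℂ[X]) : F (aeval y h) = r⁻¹ • (x * aeval y (qDiff c (h.comp (C r * X)))) := by
  induction h using Polynomial.induction_on' with
  | add p p' hp hp' =>
    rw [map_add, map_add, hp, hp', add_comp, qDiff_add, map_add, mul_add, smul_add]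
  | monomial n b =>
    rw [← smul_X_eq_monomial, smul_comp, X_pow_comp, mul_pow, ← C_pow, ← smul_eq_C_mul, smul_smul,
      qDiff_smul, map_smul, map_smul, map_smul, mul_smul_comm, smul_smul]
    cases n with
    | zero => simp [hF1, qDiff_one]
    | succ n =>
      rw [aeval_X_pow, hFy, qDiff_X_pow_succ hc, map_smul, aeval_X_pow, mul_smul_comm, smul_smul,
        smul_smul]
      congr 1
      field_simp
      ring

lemma LinearMap.apply_eq_inv_smul_of_leftInverse {K M : Type*} [Field K] [AddCommGroup M]
    [Module K M] {φ ψ : M →ₗ[K] M} (hψφ : Function.LeftInverse ψ φ) {c : K} (hc : c ≠ 0) {z : M}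
    (hz : φ z = c • z) : ψ z = c⁻¹ • z := by
  rw [eq_inv_smul_iff₀ hc, ← map_smul, ← hz, hψφ]

theorem statement8_general {Z : Type*} [Ring Z] [Algebra ℂ Z]
    (q r : ℂ) (hq0 : q ≠ 0) (hq2 : q ^ 2 ≠ 1) (hr : r ^ 2 = q)
    (x y : Z) (hxy : x * y = q • (y * x))
    (aF aK₁ aK₂ aK₁i aK₂i : Z →ₗ[ℂ] Z)
    (hK1mul : ∀ z w : Z, aK₁ (z * w) = aK₁ z * aK₁ w) (hK1one : aK₁ 1 = 1)
    (hK2mul : ∀ z w : Z, aK₂ (z * w) = aK₂ z * aK₂ w) (hK2one : aK₂ 1 = 1)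
    (hK1imul : ∀ z w : Z, aK₁i (z * w) = aK₁i z * aK₁i w) (hK1ione : aK₁i 1 = 1)
    (hK2imul : ∀ z w : Z, aK₂i (z * w) = aK₂i z * aK₂i w) (hK2ione : aK₂i 1 = 1)
    (hK1inv' : ∀ z : Z, aK₁i (aK₁ z) = z) (hK2inv' : ∀ z : Z, aK₂i (aK₂ z) = z)
    (hK1x : aK₁ x = r⁻¹ • x) (hK1y : aK₁ y = y)
    (hK2x : aK₂ x = x) (hK2y : aK₂ y = r⁻¹ • y)
    (hFx : aF x = 0) (hFy : aF y = x) (hF1 : aF 1 = 0)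
    (hFmod : ∀ z w : Z, aF (z * w) = aF z * aK₁ (aK₂i w) + aK₁i (aK₂ z) * aF w) :
    ∀ g h : Polynomial ℂ,
      aF (Polynomial.aeval x g * Polynomial.aeval y h) =
        r⁻¹ • (Polynomial.aeval x (g.comp (Polynomial.C r * Polynomial.X)) *
          (x * Polynomial.aeval y
            (qDiff ((q ^ 2)⁻¹) (h.comp (Polynomial.C r * Polynomial.X))))) := by
  intro g h
  have hr0 : r ≠ 0 := by rintro rfl; exact hq0 (by simp [← hr])
  have hc : (q ^ 2)⁻¹ ≠ 1 := by rwa [Ne, inv_eq_one]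
  let σ := (AlgHom.ofLinearMap aK₁ hK1one hK1mul).comp (AlgHom.ofLinearMap aK₂i hK2ione hK2imul)
  let τ := (AlgHom.ofLinearMap aK₁i hK1ione hK1imul).comp (AlgHom.ofLinearMap aK₂ hK2one hK2mul)
  have hF : ∀ z w, aF (z * w) = aF z * σ w + τ z * aF w := hFmod
  have hK1ix : aK₁i x = r • x := by
    simpa using LinearMap.apply_eq_inv_smul_of_leftInverse hK1inv' (inv_ne_zero hr0) hK1x
  have hK1iy : aK₁i y = y := by simpa [hK1y] using hK1inv' y
  have hK2iy : aK₂i y = r • y := by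
    simpa using LinearMap.apply_eq_inv_smul_of_leftInverse hK2inv' (inv_ne_zero hr0) hK2y
  have hτx : τ x = r • x := by simp [τ, hK2x, hK1ix]
  have hτy : τ y = r⁻¹ • y := by simp [τ, hK2y, hK1iy]
  have hσy : σ y = r • y := by simp [σ, hK2iy, hK1y]
  have hyx : y * aF y = q⁻¹ • (aF y * y) := by
    rw [hFy, hxy, inv_smul_smul₀ hq0]
  have hcoef : r⁻¹ * q⁻¹ = r * (q ^ 2)⁻¹ := by
    rw [← hr]; field_simp
  rw [map_aeval_mul_of_twisted_leibniz hF hF1 hFx, ← aeval_algHom_apply, hτx,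
    aeval_smul_eq_aeval_comp, map_aeval_eq_smul_qDiff hr0 hc hF1, mul_smul_comm]
  intro n
  rw [map_pow_succ_of_twisted_leibniz hF hσy hτy hyx hcoef, hFy]

/-- In the quantum plane `O(ℂ²_q)` with its `U_q(gl₂)`-module algebra
structure (`r = q^{1/2}`), for polynomials `g, h` in one variable:
`F ▷ (g(x)h(y)) = q^{-1/2} g(q^{1/2}x) · x · D_{q^{-2}}(h(q^{1/2}·))(y)`. -/
theorem statement8 {Z : Type*} [Ring Z] [Algebra ℂ Z]
    (q r : ℂ) (hq0 : q ≠ 0) (hq2 : q ^ 2 ≠ 1) (hr : r ^ 2 = q)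
    (x y : Z) (hxy : x * y = q • (y * x))
    (aE aF aK₁ aK₂ aK₁i aK₂i : Z →ₗ[ℂ] Z)
    (hK1mul : ∀ z w : Z, aK₁ (z * w) = aK₁ z * aK₁ w) (hK1one : aK₁ 1 = 1)
    (hK2mul : ∀ z w : Z, aK₂ (z * w) = aK₂ z * aK₂ w) (hK2one : aK₂ 1 = 1)
    (hK1imul : ∀ z w : Z, aK₁i (z * w) = aK₁i z * aK₁i w) (hK1ione : aK₁i 1 = 1)
    (hK2imul : ∀ z w : Z, aK₂i (z * w) = aK₂i z * aK₂i w) (hK2ione : aK₂i 1 = 1)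
    (hK1inv : ∀ z : Z, aK₁ (aK₁i z) = z) (hK1inv' : ∀ z : Z, aK₁i (aK₁ z) = z)
    (hK2inv : ∀ z : Z, aK₂ (aK₂i z) = z) (hK2inv' : ∀ z : Z, aK₂i (aK₂ z) = z)
    (hK1x : aK₁ x = r⁻¹ • x) (hK1y : aK₁ y = y)
    (hK2x : aK₂ x = x) (hK2y : aK₂ y = r⁻¹ • y)
    (hEx : aE x = y) (hEy : aE y = 0) (hFx : aF x = 0) (hFy : aF y = x)
    (hE1 : aE 1 = 0) (hF1 : aF 1 = 0)
    (hEmod : ∀ z w : Z, aE (z * w) = aE z * aK₁ (aK₂i w) + aK₁i (aK₂ z) * aE w)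
    (hFmod : ∀ z w : Z, aF (z * w) = aF z * aK₁ (aK₂i w) + aK₁i (aK₂ z) * aF w) :
    ∀ g h : Polynomial ℂ,
      aF (Polynomial.aeval x g * Polynomial.aeval y h) =
        r⁻¹ • (Polynomial.aeval x (g.comp (Polynomial.C r * Polynomial.X)) *
          (x * Polynomial.aeval y
            (qDiff ((q ^ 2)⁻¹) (h.comp (Polynomial.C r * Polynomial.X))))) :=
  statement8_general q r hq0 hq2 hr x y hxy aF aK₁ aK₂ aK₁i aK₂i hK1mul hK1one hK2mul hK2one hK1imul
    hK1ione hK2imul hK2ione hK1inv' hK2inv' hK1x hK1y hK2x hK2y hFx hFy hF1 hFmod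
end

section
/- Let q ∈ ℂ, q ≠ 0, q² ≠ 1, and set q^{1/8} a fixed eighth root. Let B_q be the algebra with generators x₁^{±1}, y₁^{±1}, x₂^{±1}, y₂^{±1} and relations x_j y_j = q^{1/8} y_j x_j (j = 1,2) and all cross relations between index-1 and index-2 generators commuting. Then the assignments ψ(E) = (q−q⁻¹)⁻¹ x₂² x₁⁻² (y₁⁻⁴ − y₁⁴), ψ(F) = (q−q⁻¹)⁻¹ x₁² x₂⁻² (y₂⁻⁴ − y₂⁴), ψ(K₁) = y₁², ψ(K₂) = y₂² define an algebra homomorphism ψ: U_q(gl₂) → B_q. -/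
set_option linter.unusedSectionVars false
set_option maxHeartbeats 4000000
section helpers
variable {B : Type*} [Ring B] [Algebra ℂ B]

/-- From `a*b = s•(b*a)` and `bi` a two-sided inverse of `b`, get `bi*a = s•(a*bi)`. -/
lemma st10_swapL (s : ℂ) (a b bi : B) (h : a * b = s • (b * a))
    (hb : b * bi = 1) (hb' : bi * b = 1) : bi * a = s • (a * bi) := by
  have key : bi * (a * b) * bi = s • (a * bi) := by
    rw [h, mul_smul_comm, smul_mul_assoc]
    congr 1
    rw [← mul_assoc bi b a, hb', one_mul]
  calc bi * a = bi * a * (b * bi) := by rw [hb, mul_one]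
    _ = bi * (a * b) * bi := by rw [← mul_assoc, mul_assoc bi a b]
    _ = s • (a * bi) := key

/-- From `a*b = s•(b*a)` and `ai` a two-sided inverse of `a`, get `b*ai = s•(ai*b)`. -/
lemma st10_swapR (s : ℂ) (a ai b : B) (h : a * b = s • (b * a))
    (ha : a * ai = 1) (ha' : ai * a = 1) : b * ai = s • (ai * b) := by
  have key : ai * (a * b) * ai = s • (ai * b) := by
    rw [h, mul_smul_comm, smul_mul_assoc]
    congr 1
    rw [mul_assoc, mul_assoc, ha, mul_one]
  calc b * ai = (ai * a) * (b * ai) := by rw [ha', one_mul]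
    _ = ai * (a * b) * ai := by rw [mul_assoc, ← mul_assoc a b ai, ← mul_assoc]
    _ = s • (ai * b) := key

lemma st10_flip (s : ℂ) (hs : s ≠ 0) (a b : B) (h : a * b = s • (b * a)) :
    b * a = s⁻¹ • (a * b) := by
  rw [h, smul_smul, inv_mul_cancel₀ hs, one_smul]

lemma st10_swapLc (a b bi : B) (h : a * b = b * a)
    (hb : b * bi = 1) (hb' : bi * b = 1) : bi * a = a * bi := by
  have := st10_swapL (1:ℂ) a b bi (by rw [one_smul, h]) hb hb'
  rwa [one_smul] at this

lemma st10_swapRc (a ai b : B) (h : a * b = b * a)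
    (ha : a * ai = 1) (ha' : ai * a = 1) : b * ai = ai * b := by
  have := st10_swapR (1:ℂ) a ai b (by rw [one_smul, h]) ha ha'
  rwa [one_smul] at this

lemma st10_extS (s : ℂ) (u v : B) (h : v * u = s • (u * v)) :
    ∀ z, v * (u * z) = s • (u * (v * z)) := fun z => by
  rw [← mul_assoc, h, smul_mul_assoc, mul_assoc]

lemma st10_extC (u v : B) (h : v * u = u * v) :
    ∀ z, v * (u * z) = u * (v * z) := fun z => by
  rw [← mul_assoc, h, mul_assoc]

lemma st10_extI (u ui : B) (h : u * ui = 1) :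
    ∀ z, u * (ui * z) = z := fun z => by
  rw [← mul_assoc, h, one_mul]

end helpers



/-- In the algebra `B_q` (generators `x₁^{±1}, y₁^{±1}, x₂^{±1}, y₂^{±1}`,
relations `x_j y_j = q^{1/8} y_j x_j` and cross-index generators commuting, with `s = q^{1/8}`),
the elements `ψ(E) = λ⁻¹x₂²x₁⁻²(y₁⁻⁴−y₁⁴)`, `ψ(F) = λ⁻¹x₁²x₂⁻²(y₂⁻⁴−y₂⁴)`,
`ψ(K₁) = y₁²`, `ψ(K₂) = y₂²` satisfy the defining relations of `U_q(gl₂)`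
(so that `ψ` defines an algebra homomorphism `U_q(gl₂) → B_q`); here `q^{1/2} = s⁴`,
`λ = q − q⁻¹`. -/
theorem statement10 {B : Type*} [Ring B] [Algebra ℂ B]
    (q s : ℂ) (hq0 : q ≠ 0) (hs : s ^ 8 = q)
    (x₁ y₁ x₂ y₂ x₁i y₁i x₂i y₂i : B)
    (h1 : x₁ * y₁ = s • (y₁ * x₁)) (h2 : x₂ * y₂ = s • (y₂ * x₂))
    (hx1 : x₁ * x₁i = 1) (hx1' : x₁i * x₁ = 1) (hy1 : y₁ * y₁i = 1) (hy1' : y₁i * y₁ = 1)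
    (hx2 : x₂ * x₂i = 1) (hx2' : x₂i * x₂ = 1) (hy2 : y₂ * y₂i = 1) (hy2' : y₂i * y₂ = 1)
    (c1 : x₁ * x₂ = x₂ * x₁) (c2 : x₁ * y₂ = y₂ * x₁)
    (c3 : y₁ * x₂ = x₂ * y₁) (c4 : y₁ * y₂ = y₂ * y₁) :
    (y₁ ^ 2 * y₂ ^ 2 = y₂ ^ 2 * y₁ ^ 2) ∧
    (y₁ ^ 2 * y₁i ^ 2 = 1) ∧ (y₁i ^ 2 * y₁ ^ 2 = 1) ∧
    (y₂ ^ 2 * y₂i ^ 2 = 1) ∧ (y₂i ^ 2 * y₂ ^ 2 = 1) ∧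
    (y₁ ^ 2 * ((q - q⁻¹)⁻¹ • (x₂ ^ 2 * x₁i ^ 2 * (y₁i ^ 4 - y₁ ^ 4))) * y₁i ^ 2 =
      s ^ 4 • ((q - q⁻¹)⁻¹ • (x₂ ^ 2 * x₁i ^ 2 * (y₁i ^ 4 - y₁ ^ 4)))) ∧
    (y₂ ^ 2 * ((q - q⁻¹)⁻¹ • (x₂ ^ 2 * x₁i ^ 2 * (y₁i ^ 4 - y₁ ^ 4))) * y₂i ^ 2 =
      (s ^ 4)⁻¹ • ((q - q⁻¹)⁻¹ • (x₂ ^ 2 * x₁i ^ 2 * (y₁i ^ 4 - y₁ ^ 4)))) ∧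
    (y₁ ^ 2 * ((q - q⁻¹)⁻¹ • (x₁ ^ 2 * x₂i ^ 2 * (y₂i ^ 4 - y₂ ^ 4))) * y₁i ^ 2 =
      (s ^ 4)⁻¹ • ((q - q⁻¹)⁻¹ • (x₁ ^ 2 * x₂i ^ 2 * (y₂i ^ 4 - y₂ ^ 4)))) ∧
    (y₂ ^ 2 * ((q - q⁻¹)⁻¹ • (x₁ ^ 2 * x₂i ^ 2 * (y₂i ^ 4 - y₂ ^ 4))) * y₂i ^ 2 =
      s ^ 4 • ((q - q⁻¹)⁻¹ • (x₁ ^ 2 * x₂i ^ 2 * (y₂i ^ 4 - y₂ ^ 4)))) ∧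
    (((q - q⁻¹)⁻¹ • (x₂ ^ 2 * x₁i ^ 2 * (y₁i ^ 4 - y₁ ^ 4))) *
        ((q - q⁻¹)⁻¹ • (x₁ ^ 2 * x₂i ^ 2 * (y₂i ^ 4 - y₂ ^ 4))) -
      ((q - q⁻¹)⁻¹ • (x₁ ^ 2 * x₂i ^ 2 * (y₂i ^ 4 - y₂ ^ 4))) *
        ((q - q⁻¹)⁻¹ • (x₂ ^ 2 * x₁i ^ 2 * (y₁i ^ 4 - y₁ ^ 4))) =
      (q - q⁻¹)⁻¹ •
        ((y₁ ^ 2 * y₂i ^ 2) * (y₁ ^ 2 * y₂i ^ 2) -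
         (y₁i ^ 2 * y₂ ^ 2) * (y₁i ^ 2 * y₂ ^ 2))) := by
  have s0 : s ≠ 0 := by
    intro h
    rw [← hs, h] at hq0
    exact hq0 (by norm_num)
  have hp2 : ∀ a : B, a ^ 2 = a * a := fun a => pow_two a
  have hp4 : ∀ a : B, a ^ 4 = a * a * (a * a) := fun a => by
    rw [show (4:ℕ) = 2 + 2 from rfl, pow_add, pow_two]
  -- y-y swap rules
  have r1 : y₂ * y₁ = y₁ * y₂ := c4.symm
  have r2 : y₂ * y₁i = y₁i * y₂ := st10_swapRc y₁ y₁i y₂ c4 hy1 hy1'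
  have r3 : y₂i * y₁ = y₁ * y₂i := st10_swapLc y₁ y₂ y₂i c4 hy2 hy2'
  have r4 : y₂i * y₁i = y₁i * y₂i := st10_swapLc y₁i y₂ y₂i r2.symm hy2 hy2'
  -- x-x swap rules
  have r5 : x₂ * x₁ = x₁ * x₂ := c1.symm
  have r6 : x₂ * x₁i = x₁i * x₂ := st10_swapRc x₁ x₁i x₂ c1 hx1 hx1'
  have r7 : x₂i * x₁ = x₁ * x₂i := st10_swapLc x₁ x₂ x₂i c1 hx2 hx2'
  have r8 : x₂i * x₁i = x₁i * x₂i := st10_swapLc x₁i x₂ x₂i r6.symm hx2 hx2'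
  -- x₁-y₁
  have hA : y₁i * x₁ = s • (x₁ * y₁i) := st10_swapL s x₁ y₁ y₁i h1 hy1 hy1'
  have r9 : x₁ * y₁i = s⁻¹ • (y₁i * x₁) := st10_flip s s0 y₁i x₁ hA
  have hB : y₁ * x₁i = s • (x₁i * y₁) := st10_swapR s x₁ x₁i y₁ h1 hx1 hx1'
  have r10 : x₁i * y₁ = s⁻¹ • (y₁ * x₁i) := st10_flip s s0 y₁ x₁i hB
  have r11 : x₁i * y₁i = s • (y₁i * x₁i) := st10_swapR s y₁ y₁i x₁i hB hy1 hy1'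
  -- x₂-y₂
  have hA2 : y₂i * x₂ = s • (x₂ * y₂i) := st10_swapL s x₂ y₂ y₂i h2 hy2 hy2'
  have r12 : x₂ * y₂i = s⁻¹ • (y₂i * x₂) := st10_flip s s0 y₂i x₂ hA2
  have hB2 : y₂ * x₂i = s • (x₂i * y₂) := st10_swapR s x₂ x₂i y₂ h2 hx2 hx2'
  have r13 : x₂i * y₂ = s⁻¹ • (y₂ * x₂i) := st10_flip s s0 y₂ x₂i hB2
  have r14 : x₂i * y₂i = s • (y₂i * x₂i) := st10_swapR s y₂ y₂i x₂i hB2 hy2 hy2'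
  -- x₁-y₂
  have r15 : x₁ * y₂i = y₂i * x₁ := (st10_swapLc x₁ y₂ y₂i c2 hy2 hy2').symm
  have r16 : x₁i * y₂ = y₂ * x₁i := (st10_swapRc x₁ x₁i y₂ c2 hx1 hx1').symm
  have r17 : x₁i * y₂i = y₂i * x₁i := st10_swapRc y₂ y₂i x₁i r16.symm hy2 hy2'
  -- x₂-y₁
  have r18 : x₂ * y₁ = y₁ * x₂ := c3.symm
  have r19 : x₂ * y₁i = y₁i * x₂ := st10_swapRc y₁ y₁i x₂ c3 hy1 hy1'
  have r20 : x₂i * y₁ = y₁ * x₂i := st10_swapLc y₁ x₂ x₂i c3 hx2 hx2'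
  have r21 : x₂i * y₁i = y₁i * x₂i := st10_swapRc y₁ y₁i x₂i r20.symm hy1 hy1'
  -- extended versions
  have e1 := st10_extC _ _ r1
  have e2 := st10_extC _ _ r2
  have e3 := st10_extC _ _ r3
  have e4 := st10_extC _ _ r4
  have e5 := st10_extC _ _ r5
  have e6 := st10_extC _ _ r6
  have e7 := st10_extC _ _ r7
  have e8 := st10_extC _ _ r8
  have e9 := st10_extS _ _ _ h1
  have e10 := st10_extS _ _ _ r9
  have e11 := st10_extS _ _ _ r10
  have e12 := st10_extS _ _ _ r11
  have e13 := st10_extS _ _ _ h2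
  have e14 := st10_extS _ _ _ r12
  have e15 := st10_extS _ _ _ r13
  have e16 := st10_extS _ _ _ r14
  have e17 := st10_extC _ _ c2
  have e18 := st10_extC _ _ r15
  have e19 := st10_extC _ _ r16
  have e20 := st10_extC _ _ r17
  have e21 := st10_extC _ _ r18
  have e22 := st10_extC _ _ r19
  have e23 := st10_extC _ _ r20
  have e24 := st10_extC _ _ r21
  have i1 := st10_extI _ _ hx1
  have i2 := st10_extI _ _ hx1'
  have i3 := st10_extI _ _ hy1
  have i4 := st10_extI _ _ hy1'
  have i5 := st10_extI _ _ hx2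
  have i6 := st10_extI _ _ hx2'
  have i7 := st10_extI _ _ hy2
  have i8 := st10_extI _ _ hy2'
  obtain hl | hl := eq_or_ne (q - q⁻¹) 0
  case inl =>
    refine ⟨?_, ?_, ?_, ?_, ?_, ?_, ?_, ?_, ?_, ?_⟩ <;>
      (try simp only [hl, inv_zero, zero_smul, smul_zero, mul_zero, zero_mul, sub_zero,
        mul_one, one_mul]) <;>
      (try simp only [hp2, hp4, mul_sub, sub_mul, smul_sub, mul_smul_comm,
        smul_mul_assoc, smul_smul, mul_assoc] <;>
      simp only [r1, r2, r3, r4, r5, r6, r7, r8, h1, r9, r10, r11, h2, r12, r13, r14,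
        c2, r15, r16, r17, r18, r19, r20, r21,
        e1, e2, e3, e4, e5, e6, e7, e8, e9, e10, e11, e12, e13, e14, e15, e16, e17, e18,
        e19, e20, e21, e22, e23, e24,
        hx1, hx1', hy1, hy1', hx2, hx2', hy2, hy2',
        i1, i2, i3, i4, i5, i6, i7, i8,
        mul_one, one_mul, mul_smul_comm, smul_mul_assoc, smul_smul, one_smul,
        mul_sub, sub_mul, smul_sub, mul_assoc])
  case inr =>
    have h16 : (s ^ 16 - 1) ≠ 0 := by
      intro h
      apply hl
      rw [← hs, sub_eq_zero]
      exact eq_inv_of_mul_eq_one_left (by rw [← pow_add]; exact sub_eq_zero.mp h)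
    have hcv : (q - q⁻¹)⁻¹ = s ^ 8 / (s ^ 16 - 1) := by
      rw [← hs]
      have step : s ^ 8 - (s ^ 8)⁻¹ = (s ^ 16 - 1) / s ^ 8 := by
        field_simp
      rw [step, inv_div]
    have hne1 : -s ^ 4 + s ^ 20 ≠ 0 := by
      have e : -s ^ 4 + s ^ 20 = s ^ 4 * (s ^ 16 - 1) := by ring
      rw [e]; exact mul_ne_zero (pow_ne_zero _ s0) h16
    have hneD : s ^ 16 - s ^ 32 * 2 + s ^ 48 ≠ 0 := by
      have e : s ^ 16 - s ^ 32 * 2 + s ^ 48 = s ^ 16 * ((s ^ 16 - 1) * (s ^ 16 - 1)) := by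
        ring
      rw [e]; exact mul_ne_zero (pow_ne_zero _ s0) (mul_ne_zero h16 h16)
    have hne2 : -s ^ 8 + s ^ 24 ≠ 0 := by
      have e : -s ^ 8 + s ^ 24 = s ^ 8 * (s ^ 16 - 1) := by ring
      rw [e]; exact mul_ne_zero (pow_ne_zero _ s0) h16
    refine ⟨?_, ?_, ?_, ?_, ?_, ?_, ?_, ?_, ?_, ?_⟩ <;>
    · simp only [hp2, hp4, mul_sub, sub_mul, smul_sub, mul_smul_comm,
        smul_mul_assoc, smul_smul, mul_assoc]
      simp only [r1, r2, r3, r4, r5, r6, r7, r8, h1, r9, r10, r11, h2, r12, r13, r14,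
        c2, r15, r16, r17, r18, r19, r20, r21,
        e1, e2, e3, e4, e5, e6, e7, e8, e9, e10, e11, e12, e13, e14, e15, e16, e17, e18,
        e19, e20, e21, e22, e23, e24,
        hx1, hx1', hy1, hy1', hx2, hx2', hy2, hy2',
        i1, i2, i3, i4, i5, i6, i7, i8,
        mul_one, one_mul, mul_smul_comm, smul_mul_assoc, smul_smul, one_smul,
        mul_sub, sub_mul, smul_sub, mul_assoc]
      try rfl
      try (simp only [hcv]
           match_scalars <;> (try field_simp [h16, hne1, hne2]) <;> (try ring) <;>
             (try (rw [neg_inj, ← div_eq_mul_inv, ← div_eq_mul_inv,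
                      div_eq_div_iff hne1 hne2]; ring)) <;>
             (try (field_simp [hneD]; try ring)))
end

section
/- Let q ∈ ℂ with |q| = 1, q ≠ ±1, and let W be the complex vector space with basis {W(s,t) : s,t ∈ ℂ}, made into a *-algebra by W(s₁,t₁)W(s₂,t₂) = e^{πiγ(s₂t₁ − s₁t₂)} W(s₁+s₂, t₁+t₂) and W(s,t)* = W(−conj(s), −conj(t)), where q = e^{2πiγ}, γ ∈ ℝ. Define a left action of U_q(gl₂) by E ▷ W(s,t) = (q−q⁻¹)⁻¹(e^{−2πγs} − e^{2πγs}) W(s+i, t−i), F ▷ W(s,t) = (q−q⁻¹)⁻¹(e^{−2πγt} − e^{2πγt}) W(s−i, t+i), K₁ ▷ W(s,t) = e^{πγs} W(s,t), K₂ ▷ W(s,t) = e^{πγt} W(s,t). Then E ▷ (W(s,t)·W(s',t')) = (E ▷ W(s,t))·(K ▷ W(s',t')) + (K⁻¹ ▷ W(s,t))·(E ▷ W(s',t')) for all s,t,s',t' ∈ ℂ. -/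
/-- `q = e^{2πiγ}`. -/
noncomputable def qOf (γ : ℝ) : ℂ := Complex.exp ((2 * Real.pi * γ : ℝ) * Complex.I)

/-- `e^{2πγ s}` for complex `s`. -/
noncomputable def e2 (γ : ℝ) (s : ℂ) : ℂ := Complex.exp ((2 * Real.pi * γ : ℝ) * s)

/-- `e^{πγ s}` for complex `s`. -/
noncomputable def e1 (γ : ℝ) (s : ℂ) : ℂ := Complex.exp ((Real.pi * γ : ℝ) * s)

/-!
Both sides are multiples of `W(s+s'+i, t+t'-i)`. Commuting the shift `(i, -i)` through the
twisted product changes the phase by `e^{πγ(s'+t')}` on the left factor and by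
`e^{-πγ(s+t)}` on the right one; combined with the `K^{±1}`-eigenvalues these become `e^{2πγs'}`
and `e^{-2πγs}`, and the scalar identity left over is the twisted Leibniz rule
`D(s+s') = D(s) e^{2πγs'} + e^{-2πγs} D(s')` for `D(s) = e^{-2πγs} - e^{2πγs}`.
-/

open Complex

section Exponentials

variable {γ : ℝ}

theorem e2_add (a b : ℂ) : e2 γ (a + b) = e2 γ a * e2 γ b := by
  rw [e2, mul_add, exp_add, e2, e2]

theorem e1_mul_e1 {x y z : ℂ} (h : x + y = 2 * z) : e1 γ x * e1 γ y = e2 γ z := by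
  rw [e1, e1, e2, ← exp_add, ← mul_add, h]
  push_cast
  ring_nf

theorem e2_neg_sub_e2_add (a b : ℂ) :
    e2 γ (-(a + b)) - e2 γ (a + b) =
      (e2 γ (-a) - e2 γ a) * e2 γ b + e2 γ (-a) * (e2 γ (-b) - e2 γ b) := by
  rw [neg_add, e2_add, e2_add]
  ring

end Exponentials

def IsWeylSystem {A : Type*} [Ring A] [Algebra ℂ A] (γ : ℝ) (W : ℂ → ℂ → A) : Prop :=
  ∀ s₁ t₁ s₂ t₂ : ℂ,
    W s₁ t₁ * W s₂ t₂ =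
      exp ((Real.pi * γ : ℝ) * I * (s₂ * t₁ - s₁ * t₂)) • W (s₁ + s₂) (t₁ + t₂)

namespace IsWeylSystem

variable {A : Type*} [Ring A] [Algebra ℂ A] {γ : ℝ} {W : ℂ → ℂ → A}

theorem shift_mul (hW : IsWeylSystem γ W) (s t s' t' : ℂ) :
    W (s + I) (t - I) * W s' t' =
      (exp ((Real.pi * γ : ℝ) * I * (s' * t - s * t')) * e1 γ (s' + t')) •
        W (s + s' + I) (t + t' - I) := by
  rw [hW, e1, ← exp_add]
  congr 2
  · linear_combination (-(Real.pi * γ : ℝ) * (s' + t') : ℂ) * I_sq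
  · ring
  · ring

theorem mul_shift (hW : IsWeylSystem γ W) (s t s' t' : ℂ) :
    W s t * W (s' + I) (t' - I) =
      (exp ((Real.pi * γ : ℝ) * I * (s' * t - s * t')) * e1 γ (-(s + t))) •
        W (s + s' + I) (t + t' - I) := by
  rw [hW, e1, ← exp_add]
  congr 2
  · linear_combination ((Real.pi * γ : ℝ) * (s + t) : ℂ) * I_sq
  · ring
  · ring

end IsWeylSystem

theorem statement14_general {A : Type*} [Ring A] [Algebra ℂ A]
    (γ : ℝ)
    (W : ℂ → ℂ → A)
    (hmul : ∀ s₁ t₁ s₂ t₂ : ℂ,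
      W s₁ t₁ * W s₂ t₂ =
        Complex.exp ((Real.pi * γ : ℝ) * Complex.I * (s₂ * t₁ - s₁ * t₂)) •
          W (s₁ + s₂) (t₁ + t₂))
    (actE actK actKi : A →ₗ[ℂ] A)
    (hE : ∀ s t : ℂ, actE (W s t) =
      ((qOf γ - (qOf γ)⁻¹)⁻¹ * (e2 γ (-s) - e2 γ s)) • W (s + Complex.I) (t - Complex.I))
    (hK : ∀ s t : ℂ, actK (W s t) = e1 γ (s - t) • W s t)
    (hKi : ∀ s t : ℂ, actKi (W s t) = e1 γ (t - s) • W s t) :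
    ∀ s t s' t' : ℂ,
      actE (W s t * W s' t') =
        actE (W s t) * actK (W s' t') + actKi (W s t) * actE (W s' t') := by
  intro s t s' t'
  have hW : IsWeylSystem γ W := hmul
  rw [hW, map_smul, hE, hE, hE, hK, hKi, smul_mul_smul_comm, smul_mul_smul_comm,
    hW.shift_mul, hW.mul_shift, smul_smul, smul_smul, smul_smul, ← add_smul]
  congr 1
  set c := (qOf γ - (qOf γ)⁻¹)⁻¹
  set φ := exp ((Real.pi * γ : ℝ) * I * (s' * t - s * t'))
  have hK_left : e1 γ (s' - t') * e1 γ (s' + t') = e2 γ s' := e1_mul_e1 (by ring)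
  have hK_right : e1 γ (t - s) * e1 γ (-(s + t)) = e2 γ (-s) := e1_mul_e1 (by ring)
  rw [e2_neg_sub_e2_add]
  linear_combination (-(c * φ * (e2 γ (-s) - e2 γ s))) * hK_left
    - c * φ * (e2 γ (-s') - e2 γ s') * hK_right

/-- Let `q = e^{2πiγ}`, `q ≠ ±1`, and let `W` be the *-algebra with basis
`W(s,t)` and product `W(s₁,t₁)W(s₂,t₂) = e^{πiγ(s₂t₁−s₁t₂)}W(s₁+s₂,t₁+t₂)`.  With the
left `U_q(gl₂)`-action `E ▷ W(s,t) = λ⁻¹(e^{−2πγs}−e^{2πγs})W(s+i,t−i)`,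
`K^{±1} ▷ W(s,t) = e^{±πγ(s−t)}W(s,t)`, the module-algebra compatibility for `E` holds:
`E ▷ (W(s,t)W(s',t')) = (E▷W(s,t))(K▷W(s',t')) + (K⁻¹▷W(s,t))(E▷W(s',t'))`. -/
theorem statement14 {A : Type*} [Ring A] [Algebra ℂ A]
    (γ : ℝ) (hq1 : qOf γ ≠ 1) (hqm1 : qOf γ ≠ -1)
    (W : ℂ → ℂ → A)
    (hmul : ∀ s₁ t₁ s₂ t₂ : ℂ,
      W s₁ t₁ * W s₂ t₂ =
        Complex.exp ((Real.pi * γ : ℝ) * Complex.I * (s₂ * t₁ - s₁ * t₂)) •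
          W (s₁ + s₂) (t₁ + t₂))
    (actE actK actKi : A →ₗ[ℂ] A)
    (hE : ∀ s t : ℂ, actE (W s t) =
      ((qOf γ - (qOf γ)⁻¹)⁻¹ * (e2 γ (-s) - e2 γ s)) • W (s + Complex.I) (t - Complex.I))
    (hK : ∀ s t : ℂ, actK (W s t) = e1 γ (s - t) • W s t)
    (hKi : ∀ s t : ℂ, actKi (W s t) = e1 γ (t - s) • W s t) :
    ∀ s t s' t' : ℂ,
      actE (W s t * W s' t') =
        actE (W s t) * actK (W s' t') + actKi (W s t) * actE (W s' t') :=
  statement14_general γ W hmul actE actK actKi hE hK hKi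
end

section
/- In the *-algebra W of the previous context, with S(λE)* = −λE where λ = q−q⁻¹, the involution compatibility holds for E: (λE ▷ W(s,t))* = S(λE)* ▷ W(s,t)* for all s,t ∈ ℂ, i.e., applying * to (e^{−2πγs} − e^{2πγs}) W(s+i, t−i) yields −λE ▷ W(−conj(s), −conj(t)). -/
/-!
Since `|q| = 1`, `λ = q - q⁻¹` is purely imaginary, so the scalar `λ * λ⁻¹` is fixed by `*`.
Conjugating the remaining coefficient `e^{-2πγs} - e^{2πγs}` (with `γ` real) gives the same
expression at `s̄`, which is minus its value at `-s̄`; and `*` sends the shift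
`(s + i, t - i)` to `(-s̄ + i, -t̄ - i)`, the shift of `(-s̄, -t̄)`.
-/

open ComplexConjugate

theorem conj_e2 (γ : ℝ) (z : ℂ) : conj (e2 γ z) = e2 γ (conj z) := by
  rw [e2, e2, ← Complex.exp_conj, map_mul, Complex.conj_ofReal]

theorem conj_qOf (γ : ℝ) : conj (qOf γ) = (qOf γ)⁻¹ := by
  rw [qOf, ← Complex.exp_conj, ← Complex.exp_neg, map_mul, Complex.conj_ofReal, Complex.conj_I,
    mul_neg]

theorem conj_qOf_sub_inv (γ : ℝ) : conj (qOf γ - (qOf γ)⁻¹) = -(qOf γ - (qOf γ)⁻¹) := by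
  rw [map_sub, map_inv₀, conj_qOf, inv_inv, neg_sub]

/-- `l * l⁻¹` is `0` or `1`, hence real. -/
theorem conj_mul_inv_mul {l : ℂ} (hl : conj l = -l) (x : ℂ) :
    conj (l * (l⁻¹ * x)) = l * (l⁻¹ * conj x) := by
  rw [map_mul, map_mul, map_inv₀, hl, inv_neg]
  ring

theorem star_apply_add_I_sub_I {A : Type*} [Star A] {W : ℂ → ℂ → A}
    (hstarW : ∀ s t : ℂ, star (W s t) = W (-(conj s)) (-(conj t))) (s t : ℂ) :
    star (W (s + Complex.I) (t - Complex.I)) =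
      W (-(conj s) + Complex.I) (-(conj t) - Complex.I) := by
  rw [hstarW, map_add, map_sub, Complex.conj_I]
  congr 1 <;> ring

theorem statement15_general {A : Type*} [Ring A] [Algebra ℂ A] [StarRing A] [StarModule ℂ A]
    (γ : ℝ)
    (W : ℂ → ℂ → A)
    (hstarW : ∀ s t : ℂ,
      star (W s t) = W (-(starRingEnd ℂ s)) (-(starRingEnd ℂ t)))
    (actE : A →ₗ[ℂ] A)
    (hE : ∀ s t : ℂ, actE (W s t) =
      ((qOf γ - (qOf γ)⁻¹)⁻¹ * (e2 γ (-s) - e2 γ s)) • W (s + Complex.I) (t - Complex.I)) :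
    ∀ s t : ℂ,
      star ((qOf γ - (qOf γ)⁻¹) • actE (W s t)) =
        -((qOf γ - (qOf γ)⁻¹) • actE (star (W s t))) := by
  intro s t
  rw [hstarW, hE, hE, smul_smul, smul_smul, star_smul, star_apply_add_I_sub_I hstarW, ← neg_smul]
  congr 1
  rw [Complex.star_def, conj_mul_inv_mul (conj_qOf_sub_inv γ), map_sub, conj_e2, conj_e2, map_neg,
    neg_neg]
  ring

/-- In the *-algebra `W` (with `W(s,t)* = W(−s̄,−t̄)`,
`λE ▷ W(s,t) = (e^{−2πγs}−e^{2πγs})W(s+i,t−i)`, `λ = q−q⁻¹`, `q = e^{2πiγ} ≠ ±1`),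
the involution compatibility holds for `E`:
`(λE ▷ W(s,t))* = S(λE)* ▷ W(s,t)* = −λE ▷ W(−s̄,−t̄)`. -/
theorem statement15 {A : Type*} [Ring A] [Algebra ℂ A] [StarRing A] [StarModule ℂ A]
    (γ : ℝ) (hq1 : qOf γ ≠ 1) (hqm1 : qOf γ ≠ -1)
    (W : ℂ → ℂ → A)
    (hstarW : ∀ s t : ℂ,
      star (W s t) = W (-(starRingEnd ℂ s)) (-(starRingEnd ℂ t)))
    (actE : A →ₗ[ℂ] A)
    (hE : ∀ s t : ℂ, actE (W s t) =
      ((qOf γ - (qOf γ)⁻¹)⁻¹ * (e2 γ (-s) - e2 γ s)) • W (s + Complex.I) (t - Complex.I)) :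
    ∀ s t : ℂ,
      star ((qOf γ - (qOf γ)⁻¹) • actE (W s t)) =
        -((qOf γ - (qOf γ)⁻¹) • actE (star (W s t))) :=
  statement15_general γ W hstarW actE hE
end

section
/- Let Z = O(ℂ²_q) be the quantum plane (generators x,y, relation xy = qyx, q² ≠ 1) and let Ω be the free bimodule over the localization at x,y generated by a 2-dimensional central vector space with basis e₁, e₂. Set ω₋ := q²x²y⁻²e₁ + y⁻²e₂ and d₋z := ω₋z − zω₋. Then d₋x = (q²−1)q²x³y⁻²e₁ + (q²−1)xy⁻²e₂ and d₋y = (q²−1)x²y⁻¹e₁, and the bimodule relations of the Wess–Zumino calculus Γ₋ hold: y·d₋x = q⁻¹ d₋x·y + (q⁻²−1) d₋y·x, x·d₋y = q⁻¹ d₋y·x, x·d₋x = q⁻² d₋x·x, y·d₋y = q⁻² d₋y·y. -/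
/-!
Componentwise, `d₋ z` is the commutator `ω z - z ω` with a component `ω` of `ω₋`, and each
component q-commutes with the generators: `x ω = q⁻² ω x` for both, `y ω = q⁻² ω y` for
`ω = q²x²y⁻²`, and `y ω = ω y` for `ω = y⁻²`. If `ω` and `z` q-commute with `a`, so does their
commutator, with the product of the two factors; this gives the relations of the form
`a·d₋z = c d₋z·a`. The mixed relation for `y·d₋x` follows by bringing every term to the normal
order `ω x y`.
-/

/-- The free bimodule `Ω = Ǒ(ℂ²_q) e₁ ⊕ Ǒ(ℂ²_q) e₂` on two central generators,
realized as `R × R` with componentwise bimodule structure (`(z,z)` is the bimodule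
action of `z`), and the map `d₋z = ω₋ z − z ω₋` for `ω₋ = q²x²y⁻²e₁ + y⁻²e₂`. -/
def dMinus {R : Type*} [Ring R] [Algebra ℂ R] (q : ℂ) (x yi : R) (z : R) : R × R :=
  ((q ^ 2 • (x * x * (yi * yi)), yi * yi) : R × R) * (z, z) -
    (z, z) * ((q ^ 2 • (x * x * (yi * yi)), yi * yi) : R × R)

def QCommute {k A : Type*} [SMul k A] [Mul A] (c : k) (a b : A) : Prop :=
  a * b = c • (b * a)

namespace QCommute

section Semiring

variable {k A : Type*} [CommSemiring k] [Semiring A] [Algebra k A] {a a' b b' : A} {c d : k}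

theorem eq (h : QCommute c a b) : a * b = c • (b * a) := h

theorem of_commute (h : Commute a b) : QCommute (1 : k) a b := by
  rw [QCommute, one_smul]; exact h.eq

theorem smul_right (h : QCommute c a b) (r : k) : QCommute c a (r • b) := by
  rw [QCommute, mul_smul_comm, smul_mul_assoc, h.eq, smul_comm]

theorem mul_right (h : QCommute c a b) (h' : QCommute d a b') : QCommute (c * d) a (b * b') := by
  rw [QCommute, ← mul_assoc, h.eq, smul_mul_assoc, mul_assoc, h'.eq, mul_smul_comm, smul_smul,
    mul_assoc]

theorem mul_left (h : QCommute c a b) (h' : QCommute d a' b) : QCommute (c * d) (a * a') b := by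
  rw [QCommute, mul_assoc, h'.eq, mul_smul_comm, ← mul_assoc, h.eq, smul_mul_assoc, smul_smul,
    mul_comm d, mul_assoc]

theorem inverse_left (h : QCommute c a b) (hb : b * b' = 1) (hb' : b' * b = 1) :
    QCommute c b' a := by
  calc b' * a = b' * (a * b) * b' := by rw [mul_assoc, mul_assoc, hb, mul_one]
    _ = c • (b' * b * (a * b')) := by rw [h.eq, mul_smul_comm, smul_mul_assoc, mul_assoc,
        mul_assoc, mul_assoc]
    _ = c • (a * b') := by rw [hb', one_mul]

end Semiring

section Ring

variable {k A : Type*} [CommRing k] [Ring A] [Algebra k A] {a x y z ω : A} {c p s t : k}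

theorem commutator (hω : QCommute s a ω) (hz : QCommute c a z) :
    QCommute (s * c) a (ω * z - z * ω) := by
  have h₁ : a * (ω * z) = (s * c) • (ω * z * a) := by
    rw [← mul_assoc, hω.eq, smul_mul_assoc, mul_assoc, hz.eq, mul_smul_comm, smul_smul, mul_assoc]
  have h₂ : a * (z * ω) = (s * c) • (z * ω * a) := by
    rw [← mul_assoc, hz.eq, smul_mul_assoc, mul_assoc, hω.eq, mul_smul_comm, smul_smul, mul_comm c,
      mul_assoc]
  rw [QCommute, mul_sub, h₁, h₂, sub_mul, smul_sub]

theorem mul_commutator_eq (hyx : QCommute p y x) (hxω : QCommute t x ω) (hyω : QCommute s y ω) :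
    y * (ω * x - x * ω) = p • ((ω * x - x * ω) * y) + (t - 1) • ((ω * y - y * ω) * x) := by
  have e₁ : y * ω * x = (s * p) • (ω * x * y) := by
    rw [hyω.eq, smul_mul_assoc, mul_assoc, hyx.eq, mul_smul_comm, smul_smul, mul_assoc]
  have e₂ : y * x * ω = (p * s * t) • (ω * x * y) := by
    rw [hyx.eq, smul_mul_assoc, mul_assoc, hyω.eq, mul_smul_comm, ← mul_assoc, hxω.eq,
      smul_mul_assoc, smul_smul, smul_smul]
  have e₃ : x * ω * y = t • (ω * x * y) := by rw [hxω.eq, smul_mul_assoc]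
  have e₄ : ω * y * x = p • (ω * x * y) := by rw [mul_assoc, hyx.eq, mul_smul_comm, mul_assoc]
  simp only [mul_sub, sub_mul, ← mul_assoc, e₁, e₂, e₃, e₄]
  module

end Ring

theorem symm {K A : Type*} [Field K] [Ring A] [Algebra K A] {a b : A} {c : K}
    (h : QCommute c a b) (hc : c ≠ 0) : QCommute c⁻¹ b a := by
  rw [QCommute, h.eq, inv_smul_smul₀ hc]

end QCommute

theorem wessZumino_relations_of_qcommute {K A : Type*} [Field K] [Ring A] [Algebra K A]
    {q s : K} {x y ω : A} (hq : q ≠ 0) (hxy : QCommute q x y) (hx : QCommute (q ^ 2)⁻¹ x ω)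
    (hy : QCommute s y ω) :
    y * (ω * x - x * ω) = q⁻¹ • ((ω * x - x * ω) * y) + ((q ^ 2)⁻¹ - 1) • ((ω * y - y * ω) * x) ∧
      QCommute q⁻¹ x (ω * y - y * ω) ∧ QCommute (q ^ 2)⁻¹ x (ω * x - x * ω) ∧
      QCommute s y (ω * y - y * ω) := by
  refine ⟨(hxy.symm hq).mul_commutator_eq hx hy, ?_, ?_, ?_⟩
  · have h := hx.commutator hxy
    rwa [sq, mul_inv, mul_assoc, inv_mul_cancel₀ hq, mul_one] at h
  · simpa only [mul_one] using hx.commutator (.of_commute (.refl x))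
  · simpa only [mul_one] using hy.commutator (.of_commute (.refl y))

section QuantumPlane

variable {R : Type*} [Ring R] [Algebra ℂ R] {q : ℂ} {x y yi : R}

theorem dMinus_apply (z : R) :
    dMinus q x yi z =
      (q ^ 2 • (x * x * (yi * yi)) * z - z * q ^ 2 • (x * x * (yi * yi)),
        yi * yi * z - z * (yi * yi)) :=
  rfl

theorem dMinus_x_eq (hq : q ≠ 0) (hx₁ : QCommute (q ^ 2)⁻¹ x (q ^ 2 • (x * x * (yi * yi))))
    (hx₂ : QCommute (q ^ 2)⁻¹ x (yi * yi)) :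
    dMinus q x yi x =
      (((q ^ 2 - 1) * q ^ 2) • (x * x * x * (yi * yi)), (q ^ 2 - 1) • (x * (yi * yi))) := by
  have hq2 : (q ^ 2)⁻¹ ≠ 0 := inv_ne_zero (pow_ne_zero 2 hq)
  rw [dMinus_apply]
  congr 1
  · rw [(hx₁.symm hq2).eq, inv_inv]
    simp only [mul_smul_comm, mul_assoc]
    module
  · rw [(hx₂.symm hq2).eq, inv_inv, sub_smul, one_smul]

theorem dMinus_y_eq (hq : q ≠ 0) (hyl : yi * y = 1)
    (hy₁ : QCommute (q ^ 2)⁻¹ y (q ^ 2 • (x * x * (yi * yi)))) (hy₂ : Commute y (yi * yi)) :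
    dMinus q x yi y = ((q ^ 2 - 1) • (x * x * yi), (0 : R)) := by
  have hω : q ^ 2 • (x * x * (yi * yi)) * y = q ^ 2 • (x * x * yi) := by
    rw [smul_mul_assoc, mul_assoc, mul_assoc yi, hyl, mul_one]
  rw [dMinus_apply]
  congr 1
  · rw [hy₁.eq, hω, smul_smul, ← sub_smul]
    congr 1
    field_simp
  · rw [hy₂.eq, sub_self]

end QuantumPlane

theorem statement17_general {R : Type*} [Ring R] [Algebra ℂ R]
    (q : ℂ) (hq0 : q ≠ 0)
    (x y yi : R)
    (hxy : x * y = q • (y * x))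
    (hyr : y * yi = 1) (hyl : yi * y = 1) :
    dMinus q x yi x =
      (((q ^ 2 - 1) * q ^ 2) • (x * x * x * (yi * yi)), (q ^ 2 - 1) • (x * (yi * yi))) ∧
    dMinus q x yi y = ((q ^ 2 - 1) • (x * x * yi), (0 : R)) ∧
    ((y, y) : R × R) * dMinus q x yi x =
      q⁻¹ • (dMinus q x yi x * (y, y)) +
        ((q ^ 2)⁻¹ - 1) • (dMinus q x yi y * (x, x)) ∧
    ((x, x) : R × R) * dMinus q x yi y = q⁻¹ • (dMinus q x yi y * (x, x)) ∧
    ((x, x) : R × R) * dMinus q x yi x = (q ^ 2)⁻¹ • (dMinus q x yi x * (x, x)) ∧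
    ((y, y) : R × R) * dMinus q x yi y = (q ^ 2)⁻¹ • (dMinus q x yi y * (y, y)) := by
  have hyix : QCommute q yi x := QCommute.inverse_left hxy hyr hyl
  have hx₂ : QCommute (q ^ 2)⁻¹ x (yi * yi) := by
    rw [sq]; exact (hyix.mul_left hyix).symm (mul_ne_zero hq0 hq0)
  have hx₁ : QCommute (q ^ 2)⁻¹ x (q ^ 2 • (x * x * (yi * yi))) := by
    simpa only [one_mul] using
      ((QCommute.of_commute ((Commute.refl x).mul_right (.refl x))).mul_right hx₂).smul_right _
  have hyyi : Commute y yi := hyr.trans hyl.symm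
  have hy₂ : Commute y (yi * yi) := hyyi.mul_right hyyi
  have hy₁ : QCommute (q ^ 2)⁻¹ y (q ^ 2 • (x * x * (yi * yi))) := by
    have hyx : QCommute q⁻¹ y x := QCommute.symm hxy hq0
    have h := ((hyx.mul_right hyx).mul_right (.of_commute hy₂)).smul_right (q ^ 2)
    rwa [mul_one, ← mul_inv, ← sq] at h
  obtain ⟨r₁, r₂, r₃, r₄⟩ := wessZumino_relations_of_qcommute hq0 hxy hx₁ hy₁
  obtain ⟨s₁, s₂, s₃, -⟩ := wessZumino_relations_of_qcommute hq0 hxy hx₂ (.of_commute hy₂)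
  refine ⟨dMinus_x_eq hq0 hx₁ hx₂, dMinus_y_eq hq0 hyl hy₁ hy₂, Prod.ext r₁ s₁, Prod.ext r₂ s₂,
    Prod.ext r₃ s₃, Prod.ext r₄ (by simp [dMinus_apply, hy₂.eq])⟩

/-- For the quantum plane (`xy = qyx`, `q² ≠ 1`) and `d₋z = ω₋z − zω₋`
with `ω₋ = q²x²y⁻²e₁ + y⁻²e₂` in the free bimodule with central basis `e₁, e₂`,
one has `d₋x = (q²−1)q²x³y⁻²e₁ + (q²−1)xy⁻²e₂`, `d₋y = (q²−1)x²y⁻¹e₁`, and the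
bimodule relations of the Wess–Zumino calculus `Γ₋`:
`y·d₋x = q⁻¹d₋x·y + (q⁻²−1)d₋y·x`, `x·d₋y = q⁻¹d₋y·x`,
`x·d₋x = q⁻²d₋x·x`, `y·d₋y = q⁻²d₋y·y`. -/
theorem statement17 {R : Type*} [Ring R] [Algebra ℂ R]
    (q : ℂ) (hq0 : q ≠ 0) (hq2 : q ^ 2 ≠ 1)
    (x y xi yi : R)
    (hxy : x * y = q • (y * x))
    (hxr : x * xi = 1) (hxl : xi * x = 1) (hyr : y * yi = 1) (hyl : yi * y = 1) :
    dMinus q x yi x =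
      (((q ^ 2 - 1) * q ^ 2) • (x * x * x * (yi * yi)), (q ^ 2 - 1) • (x * (yi * yi))) ∧
    dMinus q x yi y = ((q ^ 2 - 1) • (x * x * yi), (0 : R)) ∧
    ((y, y) : R × R) * dMinus q x yi x =
      q⁻¹ • (dMinus q x yi x * (y, y)) +
        ((q ^ 2)⁻¹ - 1) • (dMinus q x yi y * (x, x)) ∧
    ((x, x) : R × R) * dMinus q x yi y = q⁻¹ • (dMinus q x yi y * (x, x)) ∧
    ((x, x) : R × R) * dMinus q x yi x = (q ^ 2)⁻¹ • (dMinus q x yi x * (x, x)) ∧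
    ((y, y) : R × R) * dMinus q x yi y = (q ^ 2)⁻¹ • (dMinus q x yi y * (y, y)) :=
  statement17_general q hq0 x y yi hxy hyr hyl
end
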